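/- arXiv:2408.03174 — 2 statements merged into one kernel-verified Lean document; each statement's English description precedes it below -/
import Mathlib

section
/- (Theorem 1) Let A and Ȧ be M×K complex matrices with AᴴA invertible, let Π⊥_A = I − A(AᴴA)⁻¹Aᴴ, let Δ = [A, Π⊥_A Ȧ] be the M×2K concatenated matrix, let L be an invertible 2K×2K complex matrix, and set C = ΔL. Assume CᴴC is invertible. Then for every pair of matrices X, Y taken from the set {A, Ȧ}, one has Xᴴ C (CᴴC)⁻¹ Cᴴ Y = Xᴴ Y. In particular Aᴴ C (CᴴC)⁻¹ Cᴴ A = AᴴA, Aᴴ C (CᴴC)⁻¹ Cᴴ Ȧ = AᴴȦ, Ȧᴴ C (CᴴC)⁻¹ Cᴴ A = ȦᴴA, and Ȧᴴ C (CᴴC)⁻¹ Cᴴ Ȧ = ȦᴴȦ. -/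
open Matrix

/-!
`P = C (CᴴC)⁻¹ Cᴴ` fixes every column of `C`, hence every column of `Δ = C L⁻¹`, i.e. both
`A` and `Π⊥_A Ȧ`. Since `Ȧ = Π⊥_A Ȧ + A ((AᴴA)⁻¹ Aᴴ Ȧ)`, it also fixes `Ȧ`, so
`Xᴴ P Y = Xᴴ Y` for `Y ∈ {A, Ȧ}`.
-/

namespace Matrix

variable {m n k R : Type*} [Fintype m] [CommRing R]

theorem mul_inv_mul_mul_self [Fintype n] [DecidableEq n] (C : Matrix m n R) (D : Matrix n m R)
    [Invertible (D * C)] : C * (D * C)⁻¹ * D * C = C := by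
  rw [Matrix.mul_assoc _ D, Matrix.mul_assoc, inv_mul_of_invertible, Matrix.mul_one]

theorem mul_eq_self_of_mul_mul_invertible [Fintype n] [DecidableEq n] {P : Matrix m m R}
    {Δ : Matrix m n R} (L : Matrix n n R) [Invertible L] (h : P * (Δ * L) = Δ * L) :
    P * Δ = Δ := by
  simpa [Matrix.mul_assoc] using congrArg (· * L⁻¹) h

theorem mul_fromCols_eq_self_iff {P : Matrix m m R} {A B : Matrix m n R} :
    P * fromCols A B = fromCols A B ↔ P * A = A ∧ P * B = B := by
  rw [mul_fromCols, fromCols_ext_iff]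

theorem mul_eq_self_of_mul_sub_mul_mul [DecidableEq m] [Fintype k] {P : Matrix m m R}
    {A : Matrix m k R} {G : Matrix k m R} {B : Matrix m n R} (hA : P * A = A)
    (hB : P * ((1 - A * G) * B) = (1 - A * G) * B) : P * B = B := by
  have hsplit : B = (1 - A * G) * B + A * (G * B) := by
    simp [Matrix.sub_mul, Matrix.mul_assoc]
  rw [hsplit, Matrix.mul_add, hB, ← Matrix.mul_assoc P A, hA]

end Matrix

theorem beamforming_no_information_loss_general
    {M K : ℕ}
    (A Adot : Matrix (Fin M) (Fin K) ℂ)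
    (Pp : Matrix (Fin M) (Fin M) ℂ)
    (hPp : Pp = 1 - A * (Aᴴ * A)⁻¹ * Aᴴ)
    (Δ : Matrix (Fin M) (Fin K ⊕ Fin K) ℂ)
    (hΔ : Δ = Matrix.fromCols A (Pp * Adot))
    (L : Matrix (Fin K ⊕ Fin K) (Fin K ⊕ Fin K) ℂ)
    (hL : Invertible L)
    (C : Matrix (Fin M) (Fin K ⊕ Fin K) ℂ)
    (hC : C = Δ * L)
    (hCC : Invertible (Cᴴ * C)) :
    ∀ X ∈ ({A, Adot} : Set (Matrix (Fin M) (Fin K) ℂ)),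
      ∀ Y ∈ ({A, Adot} : Set (Matrix (Fin M) (Fin K) ℂ)),
        Xᴴ * (C * (Cᴴ * C)⁻¹ * Cᴴ) * Y = Xᴴ * Y := by
  have hPC : C * (Cᴴ * C)⁻¹ * Cᴴ * C = C := mul_inv_mul_mul_self C Cᴴ
  have hPΔ : C * (Cᴴ * C)⁻¹ * Cᴴ * Δ = Δ :=
    mul_eq_self_of_mul_mul_invertible L (hC ▸ hPC)
  obtain ⟨hPA, hPPpAdot⟩ := mul_fromCols_eq_self_iff.mp (hΔ ▸ hPΔ)
  have hPAdot : C * (Cᴴ * C)⁻¹ * Cᴴ * Adot = Adot := by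
    rw [hPp, Matrix.mul_assoc A] at hPPpAdot
    exact mul_eq_self_of_mul_sub_mul_mul hPA hPPpAdot
  rintro X - Y (rfl | rfl)
  · rw [Matrix.mul_assoc, hPA]
  · rw [Matrix.mul_assoc, hPAdot]

/-- (Theorem 1) Let `Δ = [A, Pp⊥_A Ȧ]`, `C = Δ L` with `L` invertible, and suppose
`AᴴA` and `CᴴC` are invertible. Then beamforming with `C` preserves all the
Fisher-information building blocks: for every `X, Y ∈ {A, Ȧ}`,
`Xᴴ C (CᴴC)⁻¹ Cᴴ Y = Xᴴ Y`. -/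
theorem beamforming_no_information_loss
    {M K : ℕ}
    (A Adot : Matrix (Fin M) (Fin K) ℂ)
    (hA : Invertible (Aᴴ * A))
    (Pp : Matrix (Fin M) (Fin M) ℂ)
    (hPp : Pp = 1 - A * (Aᴴ * A)⁻¹ * Aᴴ)
    (Δ : Matrix (Fin M) (Fin K ⊕ Fin K) ℂ)
    (hΔ : Δ = Matrix.fromCols A (Pp * Adot))
    (L : Matrix (Fin K ⊕ Fin K) (Fin K ⊕ Fin K) ℂ)
    (hL : Invertible L)
    (C : Matrix (Fin M) (Fin K ⊕ Fin K) ℂ)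
    (hC : C = Δ * L)
    (hCC : Invertible (Cᴴ * C)) :
    ∀ X ∈ ({A, Adot} : Set (Matrix (Fin M) (Fin K) ℂ)),
      ∀ Y ∈ ({A, Adot} : Set (Matrix (Fin M) (Fin K) ℂ)),
        Xᴴ * (C * (Cᴴ * C)⁻¹ * Cᴴ) * Y = Xᴴ * Y :=
  beamforming_no_information_loss_general A Adot Pp hPp Δ hΔ L hL C hC hCC
end

section
/- (Pointwise version of the SCA bound (35)) Let σ > 0, let J be an Mr×Mr Hermitian positive semidefinite complex matrix with positive semidefinite square root √J, let T̄ be Hermitian positive semidefinite, and let T be Hermitian positive definite with I − σ²T Hermitian positive definite. Define Ω̄ = I + √J · T̄ · √J. Then Ω̄ is Hermitian positive definite and log₂((det(J + T⁻¹)).re) − log₂((det(T⁻¹ − σ²I)).re) ≤ (1/ln 2)·Re(tr(Ω̄⁻¹ (I + √J · T · √J))) − Mr/ln 2 + log₂((det Ω̄).re) − log₂((det(I − σ²T)).re). -/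
open Matrix
open scoped ComplexOrder

/-- The square root of a positive semidefinite matrix, as defined in Mathlib (Dec 2024). -/
noncomputable def Matrix.PosSemidef.sqrt {n 𝕜 : Type*} [Fintype n] [DecidableEq n] [RCLike 𝕜]
    {A : Matrix n n 𝕜} (hA : A.PosSemidef) : Matrix n n 𝕜 :=
  hA.1.eigenvectorUnitary.1 * diagonal ((↑) ∘ Real.sqrt ∘ hA.1.eigenvalues) *
    (star hA.1.eigenvectorUnitary : Matrix n n 𝕜)

/-!
Write `S = √J`. Since `J + T⁻¹ = T⁻¹ (I + T S S)` and `det (I + T S · S) = det (I + S T S)`, and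
`T⁻¹ - σ² I = T⁻¹ (I - σ² T)`, the factor `det T⁻¹` cancels on the left-hand side, which becomes
`log₂ det Ω - log₂ det (I - σ² T)` with `Ω = I + S T S`. The bound is then the tangent-plane
inequality for the concave function `log det` at `Ω̄`: conjugating by `Ω̄^{-1/2}` reduces it to
`log det M ≤ tr M - n` for a positive definite `M`, i.e. `log λ ≤ λ - 1` on each eigenvalue.
-/

namespace Matrix

variable {n 𝕜 : Type*} [Fintype n] [DecidableEq n] [RCLike 𝕜]

theorem PosSemidef.posSemidef_sqrt {A : Matrix n n 𝕜} (hA : A.PosSemidef) :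
    hA.sqrt.PosSemidef := by
  have hD : (diagonal ((↑) ∘ Real.sqrt ∘ hA.1.eigenvalues) : Matrix n n 𝕜).PosSemidef :=
    posSemidef_diagonal_iff.mpr fun i => RCLike.ofReal_nonneg.mpr (Real.sqrt_nonneg _)
  simpa [PosSemidef.sqrt, star_eq_conjTranspose] using
    hD.mul_mul_conjTranspose_same hA.1.eigenvectorUnitary.1

theorem PosSemidef.sqrt_mul_self {A : Matrix n n 𝕜} (hA : A.PosSemidef) :
    hA.sqrt * hA.sqrt = A := by
  set U : Matrix n n 𝕜 := hA.1.eigenvectorUnitary.1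
  set D : Matrix n n 𝕜 := diagonal ((↑) ∘ Real.sqrt ∘ hA.1.eigenvalues)
  have hU : star U * U = 1 := Unitary.coe_star_mul_self _
  have hD : D * D = diagonal (RCLike.ofReal ∘ hA.1.eigenvalues) := by
    rw [diagonal_mul_diagonal]
    congr 1
    funext i
    simp only [Function.comp_apply, ← RCLike.ofReal_mul,
      Real.mul_self_sqrt (hA.eigenvalues_nonneg i)]
  conv_rhs => rw [hA.1.spectral_theorem, Unitary.conjStarAlgAut_apply]
  calc hA.sqrt * hA.sqrt = U * (D * (star U * U) * D) * star U := by
        simp only [PosSemidef.sqrt, U, D, Matrix.mul_assoc]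
    _ = _ := by rw [hU, Matrix.mul_one, hD]

lemma PosDef.re_det_pos {A : Matrix n n 𝕜} (hA : A.PosDef) : 0 < RCLike.re A.det :=
  (RCLike.pos_iff.mp hA.det_pos).1

lemma PosDef.re_det_mul {A : Matrix n n 𝕜} (hA : A.PosDef) (B : Matrix n n 𝕜) :
    RCLike.re (A * B).det = RCLike.re A.det * RCLike.re B.det := by
  rw [det_mul, RCLike.mul_re, (RCLike.pos_iff.mp hA.det_pos).2, zero_mul, sub_zero]

lemma PosDef.log_re_det_le_re_trace_sub_card {M : Matrix n n 𝕜} (hM : M.PosDef) :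
    Real.log (RCLike.re M.det) ≤ RCLike.re M.trace - Fintype.card n := by
  have hdet : RCLike.re M.det = ∏ i, hM.1.eigenvalues i := by
    rw [hM.1.det_eq_prod_eigenvalues, ← RCLike.ofReal_prod, RCLike.ofReal_re]
  have htrace : RCLike.re M.trace = ∑ i, hM.1.eigenvalues i := by
    rw [hM.1.trace_eq_sum_eigenvalues, ← RCLike.ofReal_sum, RCLike.ofReal_re]
  rw [hdet, htrace, Real.log_prod fun i _ => (hM.eigenvalues_pos i).ne']
  calc ∑ i, Real.log (hM.1.eigenvalues i) ≤ ∑ i, (hM.1.eigenvalues i - 1) :=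
        Finset.sum_le_sum fun i _ => Real.log_le_sub_one_of_pos (hM.eigenvalues_pos i)
    _ = ∑ i, hM.1.eigenvalues i - Fintype.card n := by simp [Finset.sum_sub_distrib]

lemma PosDef.log_re_det_le_re_trace_inv_mul {A B : Matrix n n 𝕜} (hA : A.PosDef) (hB : B.PosDef) :
    Real.log (RCLike.re B.det) ≤
      RCLike.re (A⁻¹ * B).trace - Fintype.card n + Real.log (RCLike.re A.det) := by
  set C := hA.inv.posSemidef.sqrt
  have hCC : C * C = A⁻¹ := hA.inv.posSemidef.sqrt_mul_self
  have hCH : Cᴴ = C := hA.inv.posSemidef.posSemidef_sqrt.1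
  have hCunit : IsUnit C := by
    refine (isUnit_iff_isUnit_det C).mpr (isUnit_of_mul_isUnit_left (y := C.det) ?_)
    rw [← det_mul, hCC]
    exact hA.inv.det_pos.ne'.isUnit
  have hM : (Cᴴ * B * C).PosDef :=
    hB.conjTranspose_mul_mul_same (mulVec_injective_iff_isUnit.mpr hCunit)
  have hMdet : (Cᴴ * B * C).det = (A⁻¹ * B).det := by
    rw [hCH, det_mul, det_mul, det_mul, ← hCC, det_mul]
    ring
  have hMtrace : (Cᴴ * B * C).trace = (A⁻¹ * B).trace := by
    rw [hCH, trace_mul_cycle, hCC]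
  have hAinv : RCLike.re A⁻¹.det = (RCLike.re A.det)⁻¹ := by
    refine eq_inv_of_mul_eq_one_left ?_
    rw [← hA.inv.re_det_mul, nonsing_inv_mul A hA.det_pos.ne'.isUnit, det_one, RCLike.one_re]
  have hlogdet := hM.log_re_det_le_re_trace_sub_card
  rw [hMdet, hMtrace, hA.inv.re_det_mul, hAinv, Real.log_mul (inv_pos.mpr hA.re_det_pos).ne'
    hB.re_det_pos.ne', Real.log_inv] at hlogdet
  linarith

lemma PosSemidef.posDef_one_add_mul_mul_self {S X : Matrix n n 𝕜} (hS : S.PosSemidef)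
    (hX : X.PosSemidef) : (1 + S * X * S).PosDef := by
  have := hX.conjTranspose_mul_mul_same S
  rw [hS.1] at this
  exact PosDef.one.add_posSemidef this

lemma det_add_inv_eq_det_inv_mul {J S T : Matrix n n 𝕜} (hSS : S * S = J)
    (hT : IsUnit T.det) : (J + T⁻¹).det = (T⁻¹ * (1 + S * T * S)).det := by
  have hfactor : J + T⁻¹ = T⁻¹ * (T * S * S + 1) := by
    rw [Matrix.mul_add, Matrix.mul_one, Matrix.mul_assoc T, hSS, ← Matrix.mul_assoc,
      nonsing_inv_mul T hT, Matrix.one_mul]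
  rw [hfactor, det_mul, det_mul, det_mul_add_one_comm, add_comm, ← Matrix.mul_assoc]

lemma inv_sub_smul_one_eq_inv_mul {T : Matrix n n 𝕜} (hT : IsUnit T.det) (c : 𝕜) :
    T⁻¹ - c • 1 = T⁻¹ * (1 - c • T) := by
  rw [Matrix.mul_sub, Matrix.mul_one, Matrix.mul_smul, nonsing_inv_mul T hT]

end Matrix

theorem sca_bound_compression_covariance_general
    {Mr : ℕ} (σ : ℝ)
    (J : Matrix (Fin Mr) (Fin Mr) ℂ) (hJ : J.PosSemidef)
    (Tbar : Matrix (Fin Mr) (Fin Mr) ℂ) (hTbar : Tbar.PosSemidef)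
    (T : Matrix (Fin Mr) (Fin Mr) ℂ) (hT : T.PosDef)
    (hIT : (1 - ((σ : ℂ) ^ 2) • T).PosDef)
    (Ωbar : Matrix (Fin Mr) (Fin Mr) ℂ)
    (hΩbar : Ωbar = 1 + hJ.sqrt * Tbar * hJ.sqrt) :
    Ωbar.PosDef ∧
      Real.logb 2 (J + T⁻¹).det.re - Real.logb 2 (T⁻¹ - ((σ : ℂ) ^ 2) • 1).det.re ≤
        (1 / Real.log 2) * (Ωbar⁻¹ * (1 + hJ.sqrt * T * hJ.sqrt)).trace.re
          - (Mr : ℝ) / Real.log 2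
          + Real.logb 2 Ωbar.det.re
          - Real.logb 2 (1 - ((σ : ℂ) ^ 2) • T).det.re := by
  have hΩbarPD : Ωbar.PosDef := hΩbar ▸ hJ.posSemidef_sqrt.posDef_one_add_mul_mul_self hTbar
  have hΩPD := hJ.posSemidef_sqrt.posDef_one_add_mul_mul_self hT.posSemidef
  have hlogdet := hΩbarPD.log_re_det_le_re_trace_inv_mul hΩPD
  have hT' : IsUnit T.det := hT.det_pos.ne'.isUnit
  refine ⟨hΩbarPD, ?_⟩
  simp only [← RCLike.re_to_complex]
  rw [det_add_inv_eq_det_inv_mul hJ.sqrt_mul_self hT', inv_sub_smul_one_eq_inv_mul hT',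
    hT.inv.re_det_mul, hT.inv.re_det_mul, Real.logb_mul hT.inv.re_det_pos.ne' hΩPD.re_det_pos.ne',
    Real.logb_mul hT.inv.re_det_pos.ne' hIT.re_det_pos.ne']
  have hlog2 : 0 < Real.log 2 := Real.log_pos one_lt_two
  have hlogbdet := div_le_div_of_nonneg_right hlogdet hlog2.le
  rw [Fintype.card_fin, add_div, sub_div] at hlogbdet
  simp only [Real.logb, one_div_mul_eq_div]
  linarith

/-- (Pointwise version of the SCA bound (35).) With `Ω̄ = I + √J T̄ √J`, the matrix `Ω̄`
is Hermitian positive definite and the fronthaul rate in the variable `T` satisfies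
`log₂ det(J + T⁻¹) − log₂ det(T⁻¹ − σ²I)
  ≤ (1/ln 2)·Re(tr(Ω̄⁻¹(I + √J T √J))) − Mr/ln 2 + log₂ det Ω̄ − log₂ det(I − σ²T)`. -/
theorem sca_bound_compression_covariance
    {Mr : ℕ} (σ : ℝ) (hσ : 0 < σ)
    (J : Matrix (Fin Mr) (Fin Mr) ℂ) (hJ : J.PosSemidef)
    (Tbar : Matrix (Fin Mr) (Fin Mr) ℂ) (hTbar : Tbar.PosSemidef)
    (T : Matrix (Fin Mr) (Fin Mr) ℂ) (hT : T.PosDef)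
    (hIT : (1 - ((σ : ℂ) ^ 2) • T).PosDef)
    (Ωbar : Matrix (Fin Mr) (Fin Mr) ℂ)
    (hΩbar : Ωbar = 1 + hJ.sqrt * Tbar * hJ.sqrt) :
    Ωbar.PosDef ∧
      Real.logb 2 (J + T⁻¹).det.re - Real.logb 2 (T⁻¹ - ((σ : ℂ) ^ 2) • 1).det.re ≤
        (1 / Real.log 2) * (Ωbar⁻¹ * (1 + hJ.sqrt * T * hJ.sqrt)).trace.re
          - (Mr : ℝ) / Real.log 2
          + Real.logb 2 Ωbar.det.re
          - Real.logb 2 (1 - ((σ : ℂ) ^ 2) • T).det.re :=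
  sca_bound_compression_covariance_general σ J hJ Tbar hTbar T hT hIT Ωbar hΩbar
end
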